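/- arXiv:1212.1535 — 7 statements merged into one kernel-verified Lean document; each statement's English description precedes it below -/
import Mathlib

section
/- The general tensor product is associative: for tensors 𝔸, 𝔹, ℂ of dimension n with orders m+1, k+1, r+1 respectively (m,k,r ≥ 1), we have 𝔸(𝔹ℂ) = (𝔸𝔹)ℂ. -/
open scoped BigOperators

noncomputable section

/-- An "order (1 + |α|)" tensor of dimension `|I|` over `R`: entries indexed by a
head index in `I` and a tail of indices `α → I`. -/
abbrev Tensor (R I α : Type) : Type := I → (α → I) → R

/-- The general tensor product: `(A*B)_{i α₁ ⋯ α_m} = ∑ a_{i i₂ ⋯} ∏ b_{i_j α_j}`. -/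
def tmul {R I α β : Type} [CommSemiring R] [Fintype I] [DecidableEq α] [Fintype α]
    (A : Tensor R I α) (B : Tensor R I β) : Tensor R I (α × β) :=
  fun i f => ∑ t : α → I, A i t * ∏ j : α, B (t j) (fun b => f (j, b))

/-- The general tensor product of a tensor with a vector (an order-1 tensor). -/
def tapp {R I α : Type} [CommSemiring R] [Fintype I] [DecidableEq α] [Fintype α]
    (A : Tensor R I α) (x : I → R) : I → R :=
  fun i => ∑ t : α → I, A i t * ∏ j : α, x (t j)

/-- The general tensor product `P * A` where `P` is a matrix (an order-2 tensor). -/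
def matMulT {R I α : Type} [CommSemiring R] [Fintype I]
    (P : Matrix I I R) (A : Tensor R I α) : Tensor R I α :=
  fun i f => ∑ j : I, P i j * A j f

/-- The general tensor product `A * Q` where `Q` is a matrix (an order-2 tensor). -/
def tMulMat {R I α : Type} [CommSemiring R] [Fintype I] [DecidableEq α] [Fintype α]
    (A : Tensor R I α) (Q : Matrix I I R) : Tensor R I α :=
  fun i f => ∑ t : α → I, A i t * ∏ j : α, Q (t j) (f j)

/-- The unit tensor `𝕀`: entries `1` exactly on the diagonal. -/
def unitT (R I α : Type) [CommSemiring R] [DecidableEq I] [Fintype α] [DecidableEq α] :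
    Tensor R I α :=
  fun i f => if ∀ j, f j = i then 1 else 0

/-- The direct product of two tensors of the same order. -/
def dprod {R I J α : Type} [CommSemiring R]
    (A : Tensor R I α) (B : Tensor R J α) : Tensor R (I × J) α :=
  fun p f => A p.1 (fun j => (f j).1) * B p.2 (fun j => (f j).2)

end

theorem tmul_tmul_apply {R I α β γ : Type} [CommSemiring R] [Fintype I]
    [DecidableEq α] [Fintype α] [DecidableEq β] [Fintype β]
    (A : Tensor R I α) (B : Tensor R I β) (C : Tensor R I γ) (i : I) (f : α × β × γ → I) :
    tmul A (tmul B C) i f = tmul (tmul A B) C i (f ∘ Equiv.prodAssoc α β γ) := by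
  simp only [tmul, Fintype.prod_sum, Finset.mul_sum, Finset.sum_mul, Finset.prod_mul_distrib]
  -- Expanded, the left side sums over `t : α → I` and `S : α → β → I`, the right side over
  -- `t` and `u : α × β → I`; currying `u` matches the two index sets term by term.
  rw [Finset.sum_comm, ← (Equiv.curry α β I).symm.sum_comp]
  refine Fintype.sum_congr _ _ fun S => Fintype.sum_congr _ _ fun t => ?_
  rw [Fintype.prod_prod_type, mul_assoc]
  rfl

theorem tmul_assoc_general (n m k r : ℕ)
    (A : Tensor ℂ (Fin n) (Fin m)) (B : Tensor ℂ (Fin n) (Fin k))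
    (C : Tensor ℂ (Fin n) (Fin r)) :
    ∀ (i : Fin n) (f : Fin m × Fin k × Fin r → Fin n),
      tmul A (tmul B C) i f = tmul (tmul A B) C i (fun p => f (p.1.1, p.1.2, p.2)) :=
  tmul_tmul_apply A B C

/-- associativity of the general tensor product. Here a tensor with
tail index type `Fin m` has order `m + 1`. -/
theorem tmul_assoc (n m k r : ℕ) (hm : 1 ≤ m) (hk : 1 ≤ k) (hr : 1 ≤ r)
    (A : Tensor ℂ (Fin n) (Fin m)) (B : Tensor ℂ (Fin n) (Fin k))
    (C : Tensor ℂ (Fin n) (Fin r)) :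
    ∀ (i : Fin n) (f : Fin m × Fin k × Fin r → Fin n),
      tmul A (tmul B C) i f = tmul (tmul A B) C i (fun p => f (p.1.1, p.1.2, p.2)) :=
  tmul_assoc_general n m k r A B C
end

section
/- Let P and Q be n×n complex matrices such that P𝕀Q = 𝕀, where 𝕀 is the order m ≥ 2, dimension n unit tensor. Then both P and Q are invertible. -/
open scoped BigOperators

/-!
Contracting `P 𝕀 Q = 𝕀` with a vector `x` in all tail slots gives `x ^ m = P (Q x) ^ m`
(entrywise powers), so `Q x = 0` forces `x = 0`. Taking constant tail indices instead gives
the matrix identity `P * Q^{∘m} = 1` with `Q^{∘m}` the entrywise `m`-th power of `Q`.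
-/

open Matrix

section Tensor

variable {R I α : Type} [Fintype I] [Fintype α] [DecidableEq α]

theorem tapp_matMulT [CommSemiring R] (P : Matrix I I R) (A : Tensor R I α) (x : I → R) :
    tapp (matMulT P A) x = P *ᵥ tapp A x := by
  ext i
  simp only [tapp, matMulT, mulVec, dotProduct, Finset.sum_mul, Finset.mul_sum, mul_assoc]
  exact Finset.sum_comm

theorem tapp_tMulMat [CommSemiring R] (A : Tensor R I α) (Q : Matrix I I R) (x : I → R) :
    tapp (tMulMat A Q) x = tapp A (Q *ᵥ x) := by
  ext i
  simp only [tapp, tMulMat, mulVec, dotProduct, Fintype.prod_sum, Finset.mul_sum,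
    Finset.sum_mul, mul_assoc, ← Finset.prod_mul_distrib]
  exact Finset.sum_comm

variable [DecidableEq I]

theorem sum_unitT_mul [CommSemiring R] (i : I) (g : (α → I) → R) :
    ∑ f, unitT R I α i f * g f = g fun _ => i := by
  simp only [unitT, ← funext_iff, ite_mul, one_mul, zero_mul, Finset.sum_ite_eq',
    Finset.mem_univ, if_true]

theorem tMulMat_unitT_apply [CommSemiring R] (Q : Matrix I I R) (i : I) (f : α → I) :
    tMulMat (unitT R I α) Q i f = ∏ a, Q i (f a) :=
  sum_unitT_mul i _

theorem tapp_unitT [CommSemiring R] (x : I → R) :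
    tapp (unitT R I α) x = x ^ Fintype.card α := by
  ext i
  simp only [tapp, sum_unitT_mul, Finset.prod_const, Finset.card_univ, Pi.pow_apply]

variable {P Q : Matrix I I R}

theorem pow_eq_mulVec_pow_mulVec [CommSemiring R]
    (h : matMulT P (tMulMat (unitT R I α) Q) = unitT R I α) (x : I → R) :
    x ^ Fintype.card α = P *ᵥ (Q *ᵥ x) ^ Fintype.card α := by
  rw [← tapp_unitT, ← tapp_unitT, ← tapp_tMulMat, ← tapp_matMulT, h]

theorem mul_map_pow_eq_one [CommSemiring R] [Nonempty α]
    (h : matMulT P (tMulMat (unitT R I α) Q) = unitT R I α) :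
    P * Q.map (· ^ Fintype.card α) = 1 := by
  ext i k
  have hik := congrFun (congrFun h i) fun _ => k
  simp only [matMulT, tMulMat_unitT_apply, Finset.prod_const, Finset.card_univ] at hik
  simp only [mul_apply, map_apply, one_apply, hik, unitT, forall_const, eq_comm]

theorem isUnit_left_of_matMulT_tMulMat_unitT [CommRing R] [Nonempty α]
    (h : matMulT P (tMulMat (unitT R I α) Q) = unitT R I α) : IsUnit P :=
  (isUnit_iff_isUnit_det P).2 (isUnit_det_of_right_inverse (mul_map_pow_eq_one h))

theorem isUnit_right_of_matMulT_tMulMat_unitT [Field R] [Nonempty α]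
    (h : matMulT P (tMulMat (unitT R I α) Q) = unitT R I α) :
    IsUnit Q := by
  refine mulVec_injective_iff_isUnit.1 fun x y hxy => sub_eq_zero.1 ?_
  have hcard : Fintype.card α ≠ 0 := Fintype.card_ne_zero
  have hpow := pow_eq_mulVec_pow_mulVec h (x - y)
  rw [mulVec_sub, hxy, sub_self, zero_pow hcard, mulVec_zero] at hpow
  exact pow_eq_zero_iff hcard |>.1 hpow

end Tensor

/-- if `P 𝕀 Q = 𝕀` for the unit tensor of order `m + 1 ≥ 2`, then both
`P` and `Q` are invertible. -/
theorem invertible_of_PIQ_eq_I (n m : ℕ) (hm : 1 ≤ m)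
    (P Q : Matrix (Fin n) (Fin n) ℂ)
    (h : matMulT P (tMulMat (unitT ℂ (Fin n) (Fin m)) Q) = unitT ℂ (Fin n) (Fin m)) :
    IsUnit P ∧ IsUnit Q := by
  have : Nonempty (Fin m) := ⟨⟨0, hm⟩⟩
  exact ⟨isUnit_left_of_matMulT_tMulMat_unitT h, isUnit_right_of_matMulT_tMulMat_unitT h⟩
end

section
/- Let 𝔸, 𝔹 be order m ≥ 2, dimension n tensors with 𝔹 = D^{-(m-1)} 𝔸 D for an invertible diagonal matrix D (diagonal similarity). Then x ∈ ℂⁿ is an eigenvector of 𝔹 with eigenvalue λ (i.e. 𝔹x = λ x^{[m-1]}) if and only if y = Dx is an eigenvector of 𝔸 with the same eigenvalue λ (i.e. 𝔸y = λ y^{[m-1]}). -/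
open scoped BigOperators

section DiagonalScaling

variable {R I α : Type} [CommSemiring R] [Fintype I] [DecidableEq I]

theorem matMulT_diagonal_apply (p : I → R) (A : Tensor R I α) (i : I) (f : α → I) :
    matMulT (Matrix.diagonal p) A i f = p i * A i f := by
  simp [matMulT, Matrix.diagonal_apply]

variable [Fintype α] [DecidableEq α]

theorem tMulMat_diagonal_apply (A : Tensor R I α) (q : I → R) (i : I) (f : α → I) :
    tMulMat A (Matrix.diagonal q) i f = A i f * ∏ j, q (f j) := by
  refine (Fintype.sum_eq_single f fun t ht => ?_).trans (by simp)
  obtain ⟨j, hj⟩ := Function.ne_iff.mp ht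
  rw [Finset.prod_eq_zero (Finset.mem_univ j) (Matrix.diagonal_apply_ne q hj), mul_zero]

theorem tapp_matMulT_diagonal (p : I → R) (A : Tensor R I α) (x : I → R) (i : I) :
    tapp (matMulT (Matrix.diagonal p) A) x i = p i * tapp A x i := by
  simp only [tapp, matMulT_diagonal_apply, Finset.mul_sum, mul_assoc]

theorem tapp_tMulMat_diagonal (A : Tensor R I α) (q x : I → R) :
    tapp (tMulMat A (Matrix.diagonal q)) x = tapp A (fun i => q i * x i) := by
  funext i
  simp only [tapp, tMulMat_diagonal_apply, mul_assoc, Finset.prod_mul_distrib]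

end DiagonalScaling

theorem Matrix.inv_diagonal_of_ne_zero {I K : Type} [Fintype I] [DecidableEq I] [Field K]
    {d : I → K} (hd : ∀ i, d i ≠ 0) :
    (Matrix.diagonal d)⁻¹ = Matrix.diagonal fun i => (d i)⁻¹ :=
  Matrix.inv_eq_right_inv <| by
    simp [Matrix.diagonal_mul_diagonal, mul_inv_cancel₀ (hd _)]

theorem diag_similar_eigen_general (n m : ℕ) (d : Fin n → ℂ) (hd : ∀ i, d i ≠ 0)
    (A B : Tensor ℂ (Fin n) (Fin m))
    (hB : B = matMulT ((Matrix.diagonal d)⁻¹ ^ m) (tMulMat A (Matrix.diagonal d)))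
    (lam : ℂ) (x : Fin n → ℂ) :
    (tapp B x = fun i => lam * x i ^ m) ↔
      (tapp A (fun i => d i * x i) = fun i => lam * (d i * x i) ^ m) := by
  have hBx : ∀ i, tapp B x i = (d i)⁻¹ ^ m * tapp A (fun i => d i * x i) i := by
    intro i
    rw [hB, Matrix.inv_diagonal_of_ne_zero hd, Matrix.diagonal_pow, tapp_matMulT_diagonal,
      tapp_tMulMat_diagonal, Pi.pow_apply]
  simp only [funext_iff, hBx]
  refine forall_congr' fun i => ?_
  have hdm : d i ^ m ≠ 0 := pow_ne_zero m (hd i)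
  rw [inv_pow, inv_mul_eq_iff_eq_mul₀ hdm, mul_pow, mul_left_comm]

/-- diagonal similarity and eigenvectors. `𝔹 = D^{-((m+1)-1)} 𝔸 D`;
`x` is an eigenvector of `𝔹` for `λ` iff `y = Dx` is one of `𝔸` for `λ`. -/
theorem diag_similar_eigen (n m : ℕ) (hm : 1 ≤ m) (d : Fin n → ℂ) (hd : ∀ i, d i ≠ 0)
    (A B : Tensor ℂ (Fin n) (Fin m))
    (hB : B = matMulT ((Matrix.diagonal d)⁻¹ ^ m) (tMulMat A (Matrix.diagonal d)))
    (lam : ℂ) (x : Fin n → ℂ) (hx : x ≠ 0) :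
    (tapp B x = fun i => lam * x i ^ m) ↔
      (tapp A (fun i => d i * x i) = fun i => lam * (d i * x i) ^ m) :=
  diag_similar_eigen_general n m d hd A B hB lam x
end

section
/- Let P be a real orthogonal n×n matrix and 𝔸 an order m ≥ 2 dimension n real tensor, and set 𝔹 = P𝔸Pᵀ. Then x is an E-eigenvector of 𝔸 with E-eigenvalue λ (i.e. 𝔸x = λx and xᵀx = 1) if and only if y = Px is an E-eigenvector of 𝔹 with E-eigenvalue λ. -/
open scoped BigOperators

lemma tapp_tMulMat_s13 {n m : ℕ} (A : Tensor ℝ (Fin n) (Fin m))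
    (Q : Matrix (Fin n) (Fin n) ℝ) (y : Fin n → ℝ) :
    tapp (tMulMat A Q) y = tapp A (Q.mulVec y) := by
  funext i
  simp only [tapp, tMulMat, Matrix.mulVec, dotProduct]
  calc ∑ t : Fin m → Fin n, (∑ s : Fin m → Fin n, A i s * ∏ j, Q (s j) (t j)) * ∏ j, y (t j)
      = ∑ t : Fin m → Fin n, ∑ s : Fin m → Fin n,
          A i s * ((∏ j, Q (s j) (t j)) * ∏ j, y (t j)) := by
        simp [Finset.sum_mul, mul_assoc]
    _ = ∑ s : Fin m → Fin n, ∑ t : Fin m → Fin n,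
          A i s * ((∏ j, Q (s j) (t j)) * ∏ j, y (t j)) := Finset.sum_comm
    _ = ∑ s : Fin m → Fin n, A i s * ∏ j, ∑ k, Q (s j) k * y k := by
        refine Finset.sum_congr rfl fun s _ => ?_
        rw [← Finset.mul_sum]
        congr 1
        rw [Finset.prod_univ_sum]
        simp [Finset.prod_mul_distrib]

lemma tapp_matMulT_s13 {n m : ℕ} (B : Tensor ℝ (Fin n) (Fin m))
    (P : Matrix (Fin n) (Fin n) ℝ) (y : Fin n → ℝ) :
    tapp (matMulT P B) y = P.mulVec (tapp B y) := by
  funext i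
  simp only [tapp, matMulT, Matrix.mulVec, dotProduct]
  simp only [Finset.sum_mul]
  rw [Finset.sum_comm]
  simp [Finset.mul_sum, mul_assoc]

/-- orthogonal congruence preserves E-eigenpairs: for orthogonal `P`
and `𝔹 = P 𝔸 Pᵀ`, `(λ, x)` is an E-eigenpair of `𝔸` iff `(λ, Px)` is an
E-eigenpair of `𝔹`. -/
theorem orth_congruent_E_eigen (n m : ℕ) (hm : 1 ≤ m)
    (P : Matrix (Fin n) (Fin n) ℝ) (hP : P.transpose * P = 1)
    (A : Tensor ℝ (Fin n) (Fin m)) (lam : ℝ) (x : Fin n → ℝ) :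
    ((tapp A x = fun i => lam * x i) ∧ ∑ i, x i * x i = 1) ↔
      ((tapp (matMulT P (tMulMat A P.transpose)) (P.mulVec x) =
          fun i => lam * P.mulVec x i) ∧
        ∑ i, P.mulVec x i * P.mulVec x i = 1) := by
  have hinv : ∀ v : Fin n → ℝ, P.transpose.mulVec (P.mulVec v) = v := by
    intro v
    rw [Matrix.mulVec_mulVec, hP, Matrix.one_mulVec]
  have hB : tapp (matMulT P (tMulMat A P.transpose)) (P.mulVec x)
      = P.mulVec (tapp A x) := by
    rw [tapp_matMulT_s13, tapp_tMulMat_s13, hinv]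
  have hsmul : ∀ (c : ℝ) (v : Fin n → ℝ),
      (fun i => c * P.mulVec v i) = P.mulVec (fun i => c * v i) := by
    intro c v
    have : (fun i => c * v i) = c • v := by funext i; simp
    rw [this, Matrix.mulVec_smul]
    funext i; simp
  have hnorm : ∑ i, P.mulVec x i * P.mulVec x i = ∑ i, x i * x i := by
    have h1 : ∑ i, P.mulVec x i * P.mulVec x i
        = dotProduct (P.mulVec x) (P.mulVec x) := rfl
    rw [h1, Matrix.dotProduct_mulVec, ← Matrix.mulVec_transpose, hinv]
    rfl
  constructor
  · rintro ⟨h1, h2⟩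
    refine ⟨?_, by rw [hnorm]; exact h2⟩
    rw [hB, h1, hsmul]
  · rintro ⟨h1, h2⟩
    refine ⟨?_, by rw [hnorm] at h2; exact h2⟩
    rw [hB, hsmul] at h1
    have := congrArg (P.transpose.mulVec) h1
    rwa [hinv, hinv] at this
end

section
/- For tensors 𝔸 (order k+1, dimension n), 𝔹 (order k+1, dimension m), ℂ (order r+1, dimension n), 𝔻 (order r+1, dimension m) with k, r ≥ 1, the direct product and general product satisfy (𝔸 ⊗ 𝔹)(ℂ ⊗ 𝔻) = (𝔸ℂ) ⊗ (𝔹𝔻). -/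
open scoped BigOperators

noncomputable section

theorem Fintype.sum_arrow_prod {M I J α : Type} [AddCommMonoid M] [Fintype I] [Fintype J]
    [Fintype α] [DecidableEq α] (F : (α → I) → (α → J) → M) :
    ∑ t : α → I × J, F (fun a => (t a).1) (fun a => (t a).2) = ∑ s : α → I, ∑ u : α → J, F s u := by
  rw [← Fintype.sum_prod_type']
  exact (Equiv.arrowProdEquivProdArrow α (fun _ => I) (fun _ => J)).sum_comp fun p => F p.1 p.2

theorem tmul_dprod_dprod {R I J α β : Type} [CommSemiring R] [Fintype I] [Fintype J]
    [Fintype α] [DecidableEq α] (A : Tensor R I α) (B : Tensor R J α) (C : Tensor R I β)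
    (D : Tensor R J β) :
    tmul (dprod A B) (dprod C D) = dprod (tmul A C) (tmul B D) := by
  funext p f
  simp only [tmul, dprod, Finset.prod_mul_distrib]
  rw [Fintype.sum_arrow_prod (fun s u => A p.1 s * B p.2 u *
      ((∏ j, C (s j) fun b => (f (j, b)).1) * ∏ j, D (u j) fun b => (f (j, b)).2)),
    Finset.sum_mul_sum]
  refine Finset.sum_congr rfl fun s _ => Finset.sum_congr rfl fun u _ => ?_
  ring

theorem dprod_tmul_general (n m k r : ℕ)
    (A : Tensor ℂ (Fin n) (Fin k)) (B : Tensor ℂ (Fin m) (Fin k))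
    (C : Tensor ℂ (Fin n) (Fin r)) (D : Tensor ℂ (Fin m) (Fin r)) :
    tmul (dprod A B) (dprod C D) = dprod (tmul A C) (tmul B D) :=
  tmul_dprod_dprod A B C D

/-- `(𝔸 ⊗ 𝔹)(ℂ ⊗ 𝔻) = (𝔸ℂ) ⊗ (𝔹𝔻)`; `𝔸, 𝔹` have order `k + 1`,
`ℂ, 𝔻` have order `r + 1`, with `k, r ≥ 1`. -/
theorem dprod_tmul (n m k r : ℕ) (hk : 1 ≤ k) (hr : 1 ≤ r)
    (A : Tensor ℂ (Fin n) (Fin k)) (B : Tensor ℂ (Fin m) (Fin k))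
    (C : Tensor ℂ (Fin n) (Fin r)) (D : Tensor ℂ (Fin m) (Fin r)) :
    tmul (dprod A B) (dprod C D) = dprod (tmul A C) (tmul B D) :=
  dprod_tmul_general n m k r A B C D
end
end

section
/- Let 𝔸 and 𝔹 be order k ≥ 2 tensors of dimensions n and m with 𝔸u = λ u^{[k-1]} and 𝔹v = μ v^{[k-1]}, and let w = u ⊗ v. Then (𝔸 ⊗ 𝔹)w = (λμ) w^{[k-1]}. -/
open scoped BigOperators

theorem tapp_dprod_tensor {R I J α : Type} [CommSemiring R] [Fintype I] [Fintype J]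
    [DecidableEq α] [Fintype α] (A : Tensor R I α) (B : Tensor R J α) (x : I → R) (y : J → R) :
    tapp (dprod A B) (fun p => x p.1 * y p.2) = fun p => tapp A x p.1 * tapp B y p.2 := by
  funext p
  rw [tapp, tapp, tapp, Finset.sum_mul_sum,
    ← (Equiv.arrowProdEquivProdArrow α (fun _ => I) (fun _ => J)).symm.sum_comp,
    Fintype.sum_prod_type]
  refine Finset.sum_congr rfl fun s _ => Finset.sum_congr rfl fun t _ => ?_
  simp only [dprod, Equiv.arrowProdEquivProdArrow, Equiv.coe_fn_symm_mk, Finset.prod_mul_distrib]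
  ring

theorem dprod_mul_eigen_general (n m k : ℕ)
    (A : Tensor ℂ (Fin n) (Fin k)) (B : Tensor ℂ (Fin m) (Fin k))
    (lam mu : ℂ) (u : Fin n → ℂ) (v : Fin m → ℂ)
    (hu : tapp A u = fun i => lam * u i ^ k)
    (hv : tapp B v = fun j => mu * v j ^ k) :
    tapp (dprod A B) (fun p => u p.1 * v p.2) =
      fun p => (lam * mu) * (u p.1 * v p.2) ^ k := by
  rw [tapp_dprod_tensor, hu, hv]
  funext p
  ring

/-- if `𝔸u = λ u^{[k]}` and `𝔹v = μ v^{[k]}` (tensors of order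
`k + 1 ≥ 2`), then `w = u ⊗ v` satisfies `(𝔸 ⊗ 𝔹) w = (λμ) w^{[k]}`. -/
theorem dprod_mul_eigen (n m k : ℕ) (hk : 1 ≤ k)
    (A : Tensor ℂ (Fin n) (Fin k)) (B : Tensor ℂ (Fin m) (Fin k))
    (lam mu : ℂ) (u : Fin n → ℂ) (v : Fin m → ℂ)
    (hu : tapp A u = fun i => lam * u i ^ k)
    (hv : tapp B v = fun j => mu * v j ^ k) :
    tapp (dprod A B) (fun p => u p.1 * v p.2) =
      fun p => (lam * mu) * (u p.1 * v p.2) ^ k :=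
  dprod_mul_eigen_general n m k A B lam mu u v hu hv
end

section
/- Let 𝔸 be a nonnegative tensor of order m ≥ 2 and dimension n. If 𝔸^r is essentially positive (i.e. 𝔸^r x > 0 entrywise for every nonzero nonnegative vector x ∈ ℝⁿ), then 𝔸^{r+1} is also essentially positive. -/
open scoped BigOperators

noncomputable section

/-- Tail index type of the `r+1`-st power (under the general tensor product) of a
tensor with tail `Fin m`. -/
def PowIdx (m : ℕ) : ℕ → Type
  | 0 => Fin m
  | r + 1 => Fin m × PowIdx m r

def powIdxFintype (m : ℕ) : (r : ℕ) → Fintype (PowIdx m r)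
  | 0 => inferInstanceAs (Fintype (Fin m))
  | r + 1 => letI := powIdxFintype m r; inferInstanceAs (Fintype (Fin m × PowIdx m r))

def powIdxDecEq (m : ℕ) : (r : ℕ) → DecidableEq (PowIdx m r)
  | 0 => inferInstanceAs (DecidableEq (Fin m))
  | r + 1 => letI := powIdxDecEq m r; inferInstanceAs (DecidableEq (Fin m × PowIdx m r))

instance (m r : ℕ) : Fintype (PowIdx m r) := powIdxFintype m r
instance (m r : ℕ) : DecidableEq (PowIdx m r) := powIdxDecEq m r

/-- `tpow A r` is the power `𝔸^{r+1}` of `𝔸` under the general tensor product. -/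
def tpow {R : Type} [CommSemiring R] {n m : ℕ} (A : Tensor R (Fin n) (Fin m)) :
    (r : ℕ) → Tensor R (Fin n) (PowIdx m r)
  | 0 => A
  | r + 1 => tmul A (tpow A r)

/-- A real tensor `𝔹` is essentially positive if `𝔹x > 0` entrywise for every
nonzero nonnegative vector `x`. -/
def EssPos {n : ℕ} {α : Type} [DecidableEq α] [Fintype α]
    (B : Tensor ℝ (Fin n) α) : Prop :=
  ∀ x : Fin n → ℝ, (∀ i, 0 ≤ x i) → x ≠ 0 → ∀ i, 0 < tapp B x i

end

/-! `𝔸^{r+2} x = 𝔸 (𝔸^{r+1} x)` and `𝔸^{r+1} x` is entrywise positive, so it suffices that every row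
of the nonnegative tensor `𝔸` has a positive entry; this follows from `𝔸^{r+1} 𝟙 > 0`. -/

section CommSemiring

variable {R I α β : Type} [CommSemiring R] [Fintype I] [DecidableEq α] [Fintype α]

lemma tapp_tmul [DecidableEq β] [Fintype β] (A : Tensor R I α) (B : Tensor R I β)
    (x : I → R) : tapp (tmul A B) x = tapp A (tapp B x) := by
  funext i
  simp only [tapp, tmul, Finset.sum_mul]
  rw [Finset.sum_comm]
  refine Finset.sum_congr rfl fun s _ => ?_
  rw [Finset.prod_univ_sum, Fintype.piFinset_univ, Finset.mul_sum,
    ← Equiv.sum_comp (Equiv.curry α β I).symm]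
  refine Finset.sum_congr rfl fun g _ => ?_
  simp only [Equiv.curry_symm_apply, Function.uncurry]
  rw [Finset.prod_mul_distrib, Fintype.prod_prod_type, mul_assoc]

lemma exists_ne_zero_of_tapp_ne_zero {A : Tensor R I α} {x : I → R} {i : I}
    (h : tapp A x i ≠ 0) : ∃ t, A i t ≠ 0 := by
  obtain ⟨t, -, ht⟩ := Finset.exists_ne_zero_of_sum_ne_zero h
  exact ⟨t, left_ne_zero_of_mul ht⟩

end CommSemiring

lemma tapp_pos {R I α : Type} [CommSemiring R] [PartialOrder R] [IsStrictOrderedRing R]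
    [Fintype I] [DecidableEq α] [Fintype α] {A : Tensor R I α} {x : I → R} {i : I}
    (hA : ∀ t, 0 ≤ A i t) (hrow : ∃ t, 0 < A i t) (hx : ∀ j, 0 < x j) :
    0 < tapp A x i := by
  obtain ⟨t₀, ht₀⟩ := hrow
  refine Finset.sum_pos' (fun t _ => ?_) ⟨t₀, Finset.mem_univ t₀, ?_⟩
  · exact mul_nonneg (hA t) (Finset.prod_nonneg fun j _ => (hx (t j)).le)
  · exact mul_pos ht₀ (Finset.prod_pos fun j _ => hx (t₀ j))

section Power

variable {R : Type} [CommSemiring R] {n m : ℕ}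

lemma tapp_tpow_succ (A : Tensor R (Fin n) (Fin m)) (r : ℕ) (x : Fin n → R) :
    tapp (tpow A (r + 1)) x = tapp A (tapp (tpow A r) x) :=
  tapp_tmul A (tpow A r) x

lemma EssPos.exists_row_ne_zero {A : Tensor ℝ (Fin n) (Fin m)} {r : ℕ}
    (h : EssPos (tpow A r)) (i : Fin n) : ∃ t, A i t ≠ 0 := by
  have hone := h 1 (fun _ => zero_le_one) (Function.ne_iff.mpr ⟨i, one_ne_zero⟩) i
  cases r with
  | zero => exact exists_ne_zero_of_tapp_ne_zero hone.ne'
  | succ k =>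
    rw [tapp_tpow_succ] at hone
    exact exists_ne_zero_of_tapp_ne_zero hone.ne'

end Power

theorem essPos_succ_general (n m r : ℕ)
    (A : Tensor ℝ (Fin n) (Fin m)) (hA : ∀ i f, 0 ≤ A i f)
    (h : EssPos (tpow A r)) : EssPos (tpow A (r + 1)) := by
  intro x hx hx0 i
  obtain ⟨t, ht⟩ := h.exists_row_ne_zero i
  rw [tapp_tpow_succ]
  exact tapp_pos (hA i) ⟨t, (hA i t).lt_of_ne' ht⟩ (h x hx hx0)

/-- if `𝔸^{r+1}` (`= tpow A r`) is essentially positive, so is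
`𝔸^{r+2}`. `𝔸` is a nonnegative tensor of order `m + 1 ≥ 2`. -/
theorem essPos_succ (n m r : ℕ) (hm : 1 ≤ m)
    (A : Tensor ℝ (Fin n) (Fin m)) (hA : ∀ i f, 0 ≤ A i f)
    (h : EssPos (tpow A r)) : EssPos (tpow A (r + 1)) :=
  essPos_succ_general n m r A hA h
end
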